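/- Let L be an n×n real symmetric positive semidefinite matrix with L·1 = 0 and rank(L) = n−1 (the weighted Laplacian of a connected graph), and let λ₂ > 0 be a constant such that xᵀ L x ≥ λ₂ ‖x‖² for every x ∈ ℝⁿ with xᵀ1 = 0. For distinct nodes i and j, let R_ij = (e_i − e_j)ᵀ L⁺ (e_i − e_j) and R̃_ij = dᵀ (L_SS)⁺ d, where L_SS = [[L_ii, L_ij],[L_ji, L_jj]] and d = (1, −1)ᵀ. Then for all pairwise distinct i, j, k, the approximation error on effective resistance differences satisfies |(R̃_ij − R̃_ik) − (R_ij − R_ik)| ≤ 2/λ₂. -/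

import Mathlib

open Matrix

/-- `G` satisfies the four Penrose equations for `A`, i.e. `G` is the Moore–Penrose
pseudoinverse of `A`. -/
def IsMoorePenrose {m n : ℕ} (A : Matrix (Fin m) (Fin n) ℝ)
    (G : Matrix (Fin n) (Fin m) ℝ) : Prop :=
  A * G * A = A ∧ G * A * G = G ∧ (A * G)ᵀ = A * G ∧ (G * A)ᵀ = G * A

/-!
Write `R_ab` for the effective resistance and `R̃_ab` for its two-node approximation. We show
`0 ≤ R̃_ab ≤ R_ab ≤ 2 / λ₂`, so each error `R̃_ab - R_ab` lies in `[-2/λ₂, 0]` and the difference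
of two such errors lies in `[-2/λ₂, 2/λ₂]`. The bound `R_ab ≤ ‖e_a - e_b‖² / λ₂` holds because
`L⁺` inverts `L` on `𝟙ᗮ`, where `L ≥ λ₂`. The bound `R̃_ab ≤ R_ab` is Thomson's principle:
`R_ab = max_w (2 (e_a - e_b)ᵀ w - wᵀ L w)`, and `R̃_ab` is the same maximum over `w` supported
on `{a, b}`.
-/

theorem Matrix.IsSymm.dotProduct_mulVec_comm {ι : Type*} [Fintype ι] {A : Matrix ι ι ℝ}
    (hA : A.IsSymm) (v w : ι → ℝ) : v ⬝ᵥ A *ᵥ w = (A *ᵥ v) ⬝ᵥ w := by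
  rw [dotProduct_mulVec, ← mulVec_transpose, hA.eq]

namespace IsMoorePenrose

section Rectangular

variable {m n : ℕ} {A : Matrix (Fin m) (Fin n) ℝ} {G H : Matrix (Fin n) (Fin m) ℝ}

theorem unique (hG : IsMoorePenrose A G) (hH : IsMoorePenrose A H) : G = H := by
  obtain ⟨hG1, hG2, hG3, hG4⟩ := hG
  obtain ⟨hH1, hH2, hH3, hH4⟩ := hH
  have hAG : A * G = A * H :=
    calc A * G = (A * G)ᵀ := hG3.symm
      _ = (A * H * A * G)ᵀ := by rw [hH1]
      _ = (A * G) * (A * H) := by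
          rw [Matrix.mul_assoc (A * H), transpose_mul, hG3, hH3]
      _ = A * H := by rw [← Matrix.mul_assoc, hG1]
  have hGA : G * A = H * A :=
    calc G * A = (G * A)ᵀ := hG4.symm
      _ = (G * (A * H * A))ᵀ := by rw [hH1]
      _ = (H * A) * (G * A) := by
          rw [Matrix.mul_assoc A H A, ← Matrix.mul_assoc, transpose_mul, hG4, hH4]
      _ = H * A := by rw [Matrix.mul_assoc, ← Matrix.mul_assoc A G A, hG1]
  calc G = G * A * G := hG2.symm
    _ = H * A * H := by rw [Matrix.mul_assoc, hAG, ← Matrix.mul_assoc, hGA]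
    _ = H := hH2

theorem transpose (hG : IsMoorePenrose A G) : IsMoorePenrose Aᵀ Gᵀ := by
  obtain ⟨hG1, hG2, hG3, hG4⟩ := hG
  refine ⟨?_, ?_, ?_, ?_⟩
  · rw [← transpose_mul, ← transpose_mul, ← Matrix.mul_assoc, hG1]
  · rw [← transpose_mul, ← transpose_mul, ← Matrix.mul_assoc, hG2]
  · rw [← transpose_mul, transpose_transpose, hG4]
  · rw [← transpose_mul, transpose_transpose, hG3]

end Rectangular

section Square

variable {n : ℕ} {A G : Matrix (Fin n) (Fin n) ℝ}

theorem isSymm (hA : A.IsSymm) (hG : IsMoorePenrose A G) : G.IsSymm := by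
  have h := hG.transpose
  rw [hA.eq] at h
  exact h.unique hG

theorem mul_comm_of_isSymm (hA : A.IsSymm) (hG : IsMoorePenrose A G) : G * A = A * G := by
  have h := hG.2.2.1
  rwa [transpose_mul, (hG.isSymm hA).eq, hA.eq] at h

theorem mulVec_eq_zero_of_mulVec_eq_zero (hA : A.IsSymm) (hG : IsMoorePenrose A G)
    {v : Fin n → ℝ} (hv : A *ᵥ v = 0) : G *ᵥ v = 0 :=
  calc G *ᵥ v = (G * (G * A)) *ᵥ v := by
        rw [hG.mul_comm_of_isSymm hA, ← Matrix.mul_assoc, hG.2.1]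
    _ = 0 := by rw [← mulVec_mulVec, ← mulVec_mulVec, hv, mulVec_zero, mulVec_zero]

theorem dotProduct_mulVec_self (hA : A.IsSymm) (hG : IsMoorePenrose A G) (v : Fin n → ℝ) :
    v ⬝ᵥ G *ᵥ v = (G *ᵥ v) ⬝ᵥ A *ᵥ (G *ᵥ v) := by
  conv_lhs => rw [← hG.2.1]
  rw [← mulVec_mulVec, ← mulVec_mulVec, (hG.isSymm hA).dotProduct_mulVec_comm]

theorem dotProduct_mulVec_nonneg (hA : A.PosSemidef) (hG : IsMoorePenrose A G)
    (v : Fin n → ℝ) : 0 ≤ v ⬝ᵥ G *ᵥ v := by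
  rw [hG.dotProduct_mulVec_self (isHermitian_iff_isSymm.mp hA.isHermitian)]
  simpa using hA.dotProduct_mulVec_nonneg (G *ᵥ v)

end Square

end IsMoorePenrose

theorem dotProduct_self_nonneg {ι : Type*} [Fintype ι] (v : ι → ℝ) : 0 ≤ v ⬝ᵥ v := by
  simpa using dotProduct_self_star_nonneg v

section Submatrix

variable {ι κ : Type*} [Fintype ι] [Fintype κ] [DecidableEq ι]

theorem comp_dotProduct_eq_dotProduct_mulVec_one_submatrix (x : ι → ℝ) (e : κ → ι)
    (z : κ → ℝ) :
    (x ∘ e) ⬝ᵥ z = x ⬝ᵥ (1 : Matrix ι ι ℝ).submatrix id e *ᵥ z := by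
  rw [dotProduct_mulVec]
  congr 1
  ext p
  simp [vecMul, dotProduct, one_apply]

theorem dotProduct_submatrix_mulVec_eq (L : Matrix ι ι ℝ) (e : κ → ι) (z : κ → ℝ) :
    z ⬝ᵥ L.submatrix e e *ᵥ z =
      ((1 : Matrix ι ι ℝ).submatrix id e *ᵥ z) ⬝ᵥ
        L *ᵥ ((1 : Matrix ι ι ℝ).submatrix id e *ᵥ z) := by
  have hL : L.submatrix e e =
      (1 : Matrix ι ι ℝ).submatrix e id * L * (1 : Matrix ι ι ℝ).submatrix id e := by
    ext p q
    simp [mul_apply, one_apply]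
  rw [hL, ← mulVec_mulVec, ← mulVec_mulVec, dotProduct_mulVec, ← mulVec_transpose,
    transpose_submatrix, transpose_one]

end Submatrix

/-- `lam2` is a lower bound for the algebraic connectivity (second smallest eigenvalue) of `L`. -/
def HasSpectralGap {n : ℕ} (L : Matrix (Fin n) (Fin n) ℝ) (lam2 : ℝ) : Prop :=
  ∀ x : Fin n → ℝ, x ⬝ᵥ (fun _ => (1 : ℝ)) = 0 → lam2 * (x ⬝ᵥ x) ≤ x ⬝ᵥ L *ᵥ x

section Laplacian

variable {n : ℕ} {L Lp : Matrix (Fin n) (Fin n) ℝ} {lam2 : ℝ} {x : Fin n → ℝ}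

theorem HasSpectralGap.eq_zero_of_mulVec_eq_zero (hgap : HasSpectralGap L lam2)
    (hlam2 : 0 < lam2) {v : Fin n → ℝ} (hv1 : v ⬝ᵥ (fun _ => (1 : ℝ)) = 0)
    (hLv : L *ᵥ v = 0) : v = 0 := by
  have h := hgap v hv1
  rw [hLv, dotProduct_zero] at h
  have hvv : v ⬝ᵥ v ≤ 0 := nonpos_of_mul_nonpos_right h hlam2
  exact dotProduct_self_eq_zero.mp (le_antisymm hvv (dotProduct_self_nonneg v))

theorem mulVec_mulVec_pinv_of_orthogonal_one (hL : L.IsSymm)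
    (h1 : L *ᵥ (fun _ => (1 : ℝ)) = 0) (hgap : HasSpectralGap L lam2) (hlam2 : 0 < lam2)
    (hLp : IsMoorePenrose L Lp) (hx : x ⬝ᵥ (fun _ => (1 : ℝ)) = 0) :
    L *ᵥ (Lp *ᵥ x) = x := by
  refine (sub_eq_zero.mp (hgap.eq_zero_of_mulVec_eq_zero hlam2 ?_ ?_)).symm
  · rw [sub_dotProduct, hx, dotProduct_comm, hL.dotProduct_mulVec_comm, h1, zero_dotProduct,
      sub_zero]
  · rw [mulVec_sub, mulVec_mulVec, mulVec_mulVec, Matrix.mul_assoc,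
      ← hLp.mul_comm_of_isSymm hL, ← Matrix.mul_assoc, hLp.1, sub_self]

theorem dotProduct_pinv_mulVec_le (hL : L.IsSymm) (h1 : L *ᵥ (fun _ => (1 : ℝ)) = 0)
    (hgap : HasSpectralGap L lam2) (hlam2 : 0 < lam2) (hLp : IsMoorePenrose L Lp)
    (hx : x ⬝ᵥ (fun _ => (1 : ℝ)) = 0) : x ⬝ᵥ Lp *ᵥ x ≤ (x ⬝ᵥ x) / lam2 := by
  -- With `y = Lp x` we have `L y = x`; expand `‖x - lam2 • y‖² ≥ 0` and use the gap at `y`.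
  set y := Lp *ᵥ x
  have hy1 : y ⬝ᵥ (fun _ => (1 : ℝ)) = 0 := by
    rw [← (hLp.isSymm hL).dotProduct_mulVec_comm, hLp.mulVec_eq_zero_of_mulVec_eq_zero hL h1,
      dotProduct_zero]
  have hLy : L *ᵥ y = x := mulVec_mulVec_pinv_of_orthogonal_one hL h1 hgap hlam2 hLp hx
  have hgap_y : lam2 * (y ⬝ᵥ y) ≤ x ⬝ᵥ y := by
    simpa only [hLy, dotProduct_comm y x] using hgap y hy1
  have hsq := dotProduct_self_nonneg (x - lam2 • y)
  simp only [sub_dotProduct, dotProduct_sub, smul_dotProduct, dotProduct_smul, smul_eq_mul,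
    dotProduct_comm y x] at hsq
  rw [le_div_iff₀ hlam2]
  nlinarith [mul_le_mul_of_nonneg_left hgap_y hlam2.le]

/-- Thomson's principle: `x ⬝ᵥ Lp *ᵥ x` is the maximum of `2 (x ⬝ᵥ w) - w ⬝ᵥ L *ᵥ w`,
attained at `w = Lp *ᵥ x`. -/
theorem le_dotProduct_pinv_mulVec (hL : L.PosSemidef) (h1 : L *ᵥ (fun _ => (1 : ℝ)) = 0)
    (hgap : HasSpectralGap L lam2) (hlam2 : 0 < lam2) (hLp : IsMoorePenrose L Lp)
    (hx : x ⬝ᵥ (fun _ => (1 : ℝ)) = 0) (w : Fin n → ℝ) :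
    2 * (x ⬝ᵥ w) - w ⬝ᵥ L *ᵥ w ≤ x ⬝ᵥ Lp *ᵥ x := by
  have hLs : L.IsSymm := isHermitian_iff_isSymm.mp hL.isHermitian
  set y := Lp *ᵥ x
  have hLy : L *ᵥ y = x := mulVec_mulVec_pinv_of_orthogonal_one hLs h1 hgap hlam2 hLp hx
  have hpsd : 0 ≤ (w - y) ⬝ᵥ L *ᵥ (w - y) := by simpa using hL.dotProduct_mulVec_nonneg (w - y)
  rw [mulVec_sub, hLy, sub_dotProduct, dotProduct_sub, dotProduct_sub,
    hLs.dotProduct_mulVec_comm y w, hLy, dotProduct_comm w x, dotProduct_comm y x] at hpsd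
  linarith

theorem dotProduct_pinv_submatrix_mulVec_le {m : ℕ} (e : Fin m → Fin n)
    {S : Matrix (Fin m) (Fin m) ℝ} (hL : L.PosSemidef) (h1 : L *ᵥ (fun _ => (1 : ℝ)) = 0)
    (hgap : HasSpectralGap L lam2) (hlam2 : 0 < lam2) (hLp : IsMoorePenrose L Lp)
    (hS : IsMoorePenrose (L.submatrix e e) S) (hx : x ⬝ᵥ (fun _ => (1 : ℝ)) = 0) :
    (x ∘ e) ⬝ᵥ S *ᵥ (x ∘ e) ≤ x ⬝ᵥ Lp *ᵥ x := by
  set P := (1 : Matrix (Fin n) (Fin n) ℝ).submatrix id e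
  set z := S *ᵥ (x ∘ e)
  have hSz : (x ∘ e) ⬝ᵥ z = z ⬝ᵥ L.submatrix e e *ᵥ z :=
    hS.dotProduct_mulVec_self (isHermitian_iff_isSymm.mp (hL.submatrix e).isHermitian) _
  -- `P *ᵥ z` extends `z` by zero, so the reduced problem is Thomson's principle restricted
  -- to vectors supported on the range of `e`.
  calc (x ∘ e) ⬝ᵥ z = 2 * ((x ∘ e) ⬝ᵥ z) - z ⬝ᵥ L.submatrix e e *ᵥ z := by linarith
    _ = 2 * (x ⬝ᵥ P *ᵥ z) - (P *ᵥ z) ⬝ᵥ L *ᵥ (P *ᵥ z) := by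
      rw [comp_dotProduct_eq_dotProduct_mulVec_one_submatrix, dotProduct_submatrix_mulVec_eq]
    _ ≤ x ⬝ᵥ Lp *ᵥ x := le_dotProduct_pinv_mulVec hL h1 hgap hlam2 hLp hx _

end Laplacian

theorem Matrix.submatrix_pair {n : ℕ} (L : Matrix (Fin n) (Fin n) ℝ) (a b : Fin n) :
    L.submatrix ![a, b] ![a, b] = !![L a a, L a b; L b a, L b b] := by
  ext p q
  fin_cases p <;> fin_cases q <;> rfl

theorem single_sub_single_comp_pair {n : ℕ} {a b : Fin n} (hab : a ≠ b) :
    (Pi.single a 1 - Pi.single b 1 : Fin n → ℝ) ∘ ![a, b] = ![1, -1] := by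
  ext p
  fin_cases p <;> simp [hab, hab.symm]

section PairResistance

variable {n : ℕ} {L Lp : Matrix (Fin n) (Fin n) ℝ} {lam2 : ℝ} {a b : Fin n}

theorem single_sub_single_dotProduct_one (a b : Fin n) :
    (Pi.single a 1 - Pi.single b 1 : Fin n → ℝ) ⬝ᵥ (fun _ => (1 : ℝ)) = 0 := by
  simp [sub_dotProduct]

theorem resistance_le_two_div (hL : L.IsSymm) (h1 : L *ᵥ (fun _ => (1 : ℝ)) = 0)
    (hgap : HasSpectralGap L lam2) (hlam2 : 0 < lam2) (hLp : IsMoorePenrose L Lp)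
    (hab : a ≠ b) :
    (Pi.single a 1 - Pi.single b 1) ⬝ᵥ Lp *ᵥ (Pi.single a 1 - Pi.single b 1) ≤ 2 / lam2 := by
  have hnorm : (Pi.single a 1 - Pi.single b 1 : Fin n → ℝ) ⬝ᵥ (Pi.single a 1 - Pi.single b 1)
      = 2 := by
    simp [dotProduct_sub, hab, hab.symm]
    norm_num
  simpa only [hnorm] using
    dotProduct_pinv_mulVec_le hL h1 hgap hlam2 hLp (single_sub_single_dotProduct_one a b)

theorem principalSubmatrix_resistance_mem_Icc (hL : L.PosSemidef)
    (h1 : L *ᵥ (fun _ => (1 : ℝ)) = 0)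
    (hgap : HasSpectralGap L lam2) (hlam2 : 0 < lam2) (hLp : IsMoorePenrose L Lp)
    (hab : a ≠ b) {S : Matrix (Fin 2) (Fin 2) ℝ}
    (hS : IsMoorePenrose !![L a a, L a b; L b a, L b b] S) :
    ![(1 : ℝ), -1] ⬝ᵥ S *ᵥ ![(1 : ℝ), -1] ∈ Set.Icc 0
      ((Pi.single a 1 - Pi.single b 1) ⬝ᵥ Lp *ᵥ (Pi.single a 1 - Pi.single b 1)) := by
  rw [← L.submatrix_pair] at hS
  refine ⟨hS.dotProduct_mulVec_nonneg (hL.submatrix _) _, ?_⟩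
  rw [← single_sub_single_comp_pair hab]
  exact dotProduct_pinv_submatrix_mulVec_le _ hL h1 hgap hlam2 hLp hS
    (single_sub_single_dotProduct_one a b)

end PairResistance

theorem effective_resistance_difference_error_bound_general (n : ℕ)
    (L : Matrix (Fin n) (Fin n) ℝ)
    (hL : L.PosSemidef) (h1 : L.mulVec (fun _ => (1 : ℝ)) = 0)
    (lam2 : ℝ) (hlam2 : 0 < lam2)
    (hconn : ∀ x : Fin n → ℝ, x ⬝ᵥ (fun _ => (1 : ℝ)) = 0 →
      lam2 * (x ⬝ᵥ x) ≤ x ⬝ᵥ L.mulVec x)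
    (Lp : Matrix (Fin n) (Fin n) ℝ) (hLp : IsMoorePenrose L Lp)
    (i j k : Fin n) (hij : i ≠ j) (hik : i ≠ k)
    (Spij Spik : Matrix (Fin 2) (Fin 2) ℝ)
    (hSpij : IsMoorePenrose !![L i i, L i j; L j i, L j j] Spij)
    (hSpik : IsMoorePenrose !![L i i, L i k; L k i, L k k] Spik) :
    |((![(1 : ℝ), -1] ⬝ᵥ Spij.mulVec ![(1 : ℝ), -1]) -
        (![(1 : ℝ), -1] ⬝ᵥ Spik.mulVec ![(1 : ℝ), -1])) -
      (((Pi.single i 1 - Pi.single j 1) ⬝ᵥ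
          Lp.mulVec (Pi.single i 1 - Pi.single j 1)) -
        ((Pi.single i 1 - Pi.single k 1) ⬝ᵥ
          Lp.mulVec (Pi.single i 1 - Pi.single k 1)))| ≤ 2 / lam2 := by
  have hLs : L.IsSymm := isHermitian_iff_isSymm.mp hL.isHermitian
  obtain ⟨hij_nonneg, hij_le⟩ :=
    principalSubmatrix_resistance_mem_Icc hL h1 hconn hlam2 hLp hij hSpij
  obtain ⟨hik_nonneg, hik_le⟩ :=
    principalSubmatrix_resistance_mem_Icc hL h1 hconn hlam2 hLp hik hSpik
  have hij_bound := resistance_le_two_div hLs h1 hconn hlam2 hLp hij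
  have hik_bound := resistance_le_two_div hLs h1 hconn hlam2 hLp hik
  rw [abs_le]
  constructor <;> linarith

/-- For a connected graph Laplacian `L` with algebraic connectivity at least `λ₂ > 0`,
the error of the principal-submatrix approximation on effective resistance differences
satisfies `|(R̃_ij - R̃_ik) - (R_ij - R_ik)| ≤ 2 / λ₂` for all pairwise distinct
`i, j, k`. -/
theorem effective_resistance_difference_error_bound (n : ℕ)
    (L : Matrix (Fin n) (Fin n) ℝ)
    (hL : L.PosSemidef) (h1 : L.mulVec (fun _ => (1 : ℝ)) = 0)
    (hrank : L.rank = n - 1)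
    (lam2 : ℝ) (hlam2 : 0 < lam2)
    (hconn : ∀ x : Fin n → ℝ, x ⬝ᵥ (fun _ => (1 : ℝ)) = 0 →
      lam2 * (x ⬝ᵥ x) ≤ x ⬝ᵥ L.mulVec x)
    (Lp : Matrix (Fin n) (Fin n) ℝ) (hLp : IsMoorePenrose L Lp)
    (i j k : Fin n) (hij : i ≠ j) (hik : i ≠ k) (hjk : j ≠ k)
    (Spij Spik : Matrix (Fin 2) (Fin 2) ℝ)
    (hSpij : IsMoorePenrose !![L i i, L i j; L j i, L j j] Spij)
    (hSpik : IsMoorePenrose !![L i i, L i k; L k i, L k k] Spik) :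
    |((![(1 : ℝ), -1] ⬝ᵥ Spij.mulVec ![(1 : ℝ), -1]) -
        (![(1 : ℝ), -1] ⬝ᵥ Spik.mulVec ![(1 : ℝ), -1])) -
      (((Pi.single i 1 - Pi.single j 1) ⬝ᵥ
          Lp.mulVec (Pi.single i 1 - Pi.single j 1)) -
        ((Pi.single i 1 - Pi.single k 1) ⬝ᵥ
          Lp.mulVec (Pi.single i 1 - Pi.single k 1)))| ≤ 2 / lam2 :=
  effective_resistance_difference_error_bound_general n L hL h1 lam2 hlam2 hconn Lp hLp i j k hij
    hik Spij Spik hSpij hSpik
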